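/- arXiv:1004.5146 — 2 statements merged into one kernel-verified Lean document; each statement's English description precedes it below -/
import Mathlib

section
/- Let $1<\alpha<2$, $n\geq 2$, $0\leq x<1$, and $h\in S^{n-1}$ with last coordinate $h_n$. Write $p=\frac{\alpha-1}{2}$ and let $\mathbf{x}=(0,\ldots,0,x)\in\mathbb{R}^n$. Then the principal value integral $g(x,h):=\mathrm{p.v.}\int_{-xh_n-\sqrt{x^2h_n^2-x^2+1}}^{-xh_n+\sqrt{x^2h_n^2-x^2+1}} \frac{(1-|\mathbf{x}|^2)^p - (1-|\mathbf{x}+th|^2)^p}{|t|^{1+\alpha}}\,dt$ satisfies $g(x,h) = (1-x^2+x^2h_n^2)^{-1/2}\,\big(-L_{(-1,1)}w_1\big)\!\left(\frac{xh_n}{\sqrt{1-x^2+x^2h_n^2}}\right)$, where $w_1(s)=(1-s^2)^{(\alpha-1)/2}$ on $(-1,1)$. -/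
/-!
Substituting `t = c (y - s₀)` with `c = √(1 - x² + x² h_n²)` and `s₀ = x h_n / c` maps the
chord `{x + t h}` of the unit ball onto `(-1, 1)`, and turns `1 - |x + t h|²` into
`c² (1 - y²)`; the homogeneity of the kernel then produces the factor `c⁻¹`. The principal
value of `L_{(-1,1)} w₁` exists because, near the singularity, the first-order Taylor term of
`w₁` is odd and cancels on symmetric annuli, while the second-order remainder bounds the rest of
the integrand by `M |y - s₀|^{1-α}`, which is integrable for `α < 2`.
-/

open MeasureTheory Metric Set Filter
open scoped Topology

theorem ContDiffAt.isBigO_sub_sub_fderiv {E F : Type*} [NormedAddCommGroup E] [NormedSpace ℝ E]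
    [NormedAddCommGroup F] [NormedSpace ℝ F] {f : E → F} {x : E} (hf : ContDiffAt ℝ 2 f x) :
    (fun y => f y - f x - fderiv ℝ f x (y - x)) =O[𝓝 x] fun y => ‖y - x‖ ^ 2 := by
  obtain ⟨C, hC0, hC⟩ :=
    ((hf.fderiv_right (m := 1) le_rfl).differentiableAt one_ne_zero).isBigO_sub.exists_nonneg
  have hdiff : ∀ᶠ z in 𝓝 x, DifferentiableAt ℝ f z :=
    (hf.eventually (by simp)).mono fun z hz => hz.differentiableAt (by simp)
  obtain ⟨r, hr, hball⟩ := eventually_nhds_iff_ball.mp (hC.bound.and hdiff)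
  refine Asymptotics.isBigO_iff.mpr ⟨C, eventually_nhds_iff_ball.mpr ⟨r, hr, fun y hy => ?_⟩⟩
  have hsub : closedBall x ‖y - x‖ ⊆ ball x r :=
    closedBall_subset_ball (by simpa [dist_eq_norm] using hy)
  have hmvt := (convex_closedBall x ‖y - x‖).norm_image_sub_le_of_norm_fderiv_le'
    (fun z hz => (hball z (hsub hz)).2)
    (fun z hz => ((hball z (hsub hz)).1).trans
      (mul_le_mul_of_nonneg_left (mem_closedBall_iff_norm.mp hz) hC0))
    (mem_closedBall_self (norm_nonneg _)) (mem_closedBall_iff_norm.mpr le_rfl)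
  simpa [sq, mul_assoc] using hmvt

theorem ContDiffAt.isBigO_sub_sub_deriv_mul {f : ℝ → ℝ} {x : ℝ} (hf : ContDiffAt ℝ 2 f x) :
    (fun y => f y - f x - deriv f x * (y - x)) =O[𝓝 x] fun y => (y - x) ^ 2 := by
  refine (hf.isBigO_sub_sub_fderiv.congr_right fun y => by simp).congr_left fun y => ?_
  rw [fderiv_eq_smul_deriv, smul_eq_mul, mul_comm]

section SetIntegral

variable {E : Type*} [NormedAddCommGroup E] [NormedSpace ℝ E]

theorem tendsto_setIntegral_inter_lt_abs_sub {q : ℝ → E} {S : Set ℝ} (s₀ : ℝ)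
    (hq : IntegrableOn q S) :
    Tendsto (fun ε => ∫ y in S ∩ {y | ε < |y - s₀|}, q y) (𝓝[>] 0) (𝓝 (∫ y in S, q y)) := by
  have hT : ∀ ε : ℝ, MeasurableSet {y : ℝ | ε < |y - s₀|} := fun ε =>
    measurableSet_lt measurable_const (by fun_prop)
  simp_rw [← setIntegral_indicator (hT _)]
  refine tendsto_integral_filter_of_dominated_convergence (fun y => ‖q y‖)
    (Eventually.of_forall fun ε => hq.aestronglyMeasurable.indicator (hT ε))
    (Eventually.of_forall fun ε => ae_of_all _ fun y => norm_indicator_le_norm_self _ _)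
    hq.norm (ae_restrict_of_ae (((countable_singleton s₀).ae_notMem _).mono fun y hy => ?_))
  refine tendsto_const_nhds.congr' ?_
  filter_upwards [Ioo_mem_nhdsGT (abs_pos.mpr (sub_ne_zero.mpr hy))] with ε hε
  exact (indicator_of_mem (show y ∈ {y | ε < |y - s₀|} from hε.2) q).symm

theorem setIntegral_eq_zero_of_reflect {φ : ℝ → E} {S : Set ℝ} (c : ℝ)
    (hS : (fun y => c - y) ⁻¹' S = S) (hφ : ∀ y, φ (c - y) = -φ y) :
    ∫ y in S, φ y = 0 := by
  have h := (Measure.measurePreserving_sub_left volume c).setIntegral_preimage_emb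
    (measurableEmbedding_subLeft c) φ S
  simp only [hS, hφ, integral_neg] at h
  have h2 : (2 : ℝ) • ∫ y in S, φ y = 0 := by
    rw [two_smul]; nth_rw 1 [← h]; exact neg_add_cancel _
  exact (smul_eq_zero.mp h2).resolve_left two_ne_zero

theorem setIntegral_Ioo_inter_lt_abs_eq_smul {F : ℝ → E} {a b c s₀ ε : ℝ} (hc : 0 < c) :
    ∫ t in Ioo (c * (a - s₀)) (c * (b - s₀)) ∩ {t | ε < |t|}, F t =
      c • ∫ y in Ioo a b ∩ {y | ε / c < |y - s₀|}, F (c * (y - s₀)) := by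
  set e : ℝ → ℝ := fun y => c * (y - s₀)
  have hpre : e ⁻¹' (Ioo (c * (a - s₀)) (c * (b - s₀)) ∩ {t | ε < |t|}) =
      Ioo a b ∩ {y | ε / c < |y - s₀|} := by
    ext y
    simp only [e, mem_preimage, mem_inter_iff, mem_Ioo, mem_ofPred_eq, abs_mul, abs_of_pos hc,
      mul_lt_mul_iff_right₀ hc, sub_lt_sub_iff_right, div_lt_iff₀' hc]
  have hsurj : Function.Surjective e := fun t => ⟨t / c + s₀, by simp [e]; field_simp⟩
  have hderiv : ∀ y, HasDerivAt e c y := fun y => by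
    simpa using ((hasDerivAt_id' y).sub_const s₀).const_mul c
  rw [← image_preimage_eq (Ioo (c * (a - s₀)) (c * (b - s₀)) ∩ {t | ε < |t|}) hsurj, hpre,
    integral_image_eq_integral_abs_deriv_smul (f := e) (f' := fun _ => c)
      (measurableSet_Ioo.inter (measurableSet_lt measurable_const (by fun_prop)))
      (fun y _ => (hderiv y).hasDerivWithinAt)
      ((mul_right_injective₀ hc.ne').comp sub_left_injective).injOn,
    abs_of_pos hc, integral_smul]

end SetIntegral

theorem integrableOn_ball_abs_sub_rpow {s₀ δ r : ℝ} (hr : -1 < r) :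
    IntegrableOn (fun y => |y - s₀| ^ r) (ball s₀ δ) := by
  have h0 : IntegrableOn (fun u : ℝ => |u| ^ r) (ball 0 δ) :=
    integrableOn_ball_of_norm_le_rpow (C := 1) (α := -r) (by simp) (by simp; linarith)
      (ae_of_all _ fun u => by simp [abs_of_nonneg (Real.rpow_nonneg (abs_nonneg u) r)])
      (measurable_id.abs.pow_const r).aestronglyMeasurable
  have hpre : (fun y => y - s₀) ⁻¹' ball 0 δ = ball s₀ δ := by
    ext y; simp [Real.dist_eq]
  rw [← hpre]
  exact ((measurePreserving_sub_right volume s₀).integrableOn_comp_preimage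
    (measurableEmbedding_subRight s₀)).mpr h0

theorem integrableOn_ball_div_abs_sub_rpow_of_le_sq {ψ : ℝ → ℝ} {s₀ δ M α : ℝ} (hα : α < 2)
    (hψ : AEStronglyMeasurable ψ (volume.restrict (ball s₀ δ)))
    (hM : ∀ y ∈ ball s₀ δ, |ψ y| ≤ M * (y - s₀) ^ 2) :
    IntegrableOn (fun y => ψ y / |s₀ - y| ^ (1 + α)) (ball s₀ δ) := by
  refine Integrable.mono' ((integrableOn_ball_abs_sub_rpow (s₀ := s₀) (δ := δ)
    (r := 1 - α) (by linarith)).const_mul M)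
    (hψ.div₀ (by fun_prop : Measurable fun y : ℝ => |s₀ - y| ^ (1 + α)).aestronglyMeasurable) ?_
  rw [ae_restrict_iff' measurableSet_ball]
  filter_upwards [(countable_singleton s₀).ae_notMem volume] with y hys hy
  have hpos : 0 < |y - s₀| := abs_pos.mpr (sub_ne_zero.mpr hys)
  calc ‖ψ y / |s₀ - y| ^ (1 + α)‖ = |ψ y| / |y - s₀| ^ (1 + α) := by
        rw [Real.norm_eq_abs, abs_div, abs_sub_comm s₀ y,
          abs_of_pos (Real.rpow_pos_of_pos hpos _)]
    _ ≤ M * |y - s₀| ^ (2 : ℝ) / |y - s₀| ^ (1 + α) := by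
        gcongr
        rw [Real.rpow_two, sq_abs]; exact hM y hy
    _ = M * |y - s₀| ^ (1 - α) := by
        rw [mul_div_assoc, ← Real.rpow_sub hpos]; ring_nf

theorem integrableOn_div_abs_sub_rpow_of_le_abs {f : ℝ → ℝ} {a b s₀ ε β : ℝ}
    (hf : IntegrableOn f (Ioo a b)) (hε : 0 < ε) :
    IntegrableOn (fun y => f y / |s₀ - y| ^ β) (Ioo a b ∩ {y | ε ≤ |y - s₀|}) := by
  have hclosed : IsClosed {y : ℝ | ε ≤ |y - s₀|} := isClosed_le continuous_const (by fun_prop)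
  have hcont : ContinuousOn (fun y => (|s₀ - y| ^ β)⁻¹) (Icc a b ∩ {y | ε ≤ |y - s₀|}) := by
    intro y hy
    have hpos : 0 < |s₀ - y| := by rw [abs_sub_comm]; exact hε.trans_le hy.2
    exact (((continuous_const.sub continuous_id).abs.continuousAt.rpow_const
      (Or.inl hpos.ne')).inv₀ (Real.rpow_pos_of_pos hpos β).ne').continuousWithinAt
  simpa only [div_eq_mul_inv] using (hf.mono_set inter_subset_left).mul_continuousOn_of_subset hcont
    (measurableSet_Ioo.inter hclosed.measurableSet) (isCompact_Icc.inter_right hclosed)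
    (inter_subset_inter_left _ Ioo_subset_Icc_self)

theorem setIntegral_inter_lt_abs_sub_indicator_ball_eq_zero {a b s₀ δ ε K β : ℝ}
    (hδ : ball s₀ δ ⊆ Ioo a b) :
    ∫ y in Ioo a b ∩ {y | ε < |y - s₀|},
      (ball s₀ δ).indicator (fun y => K * (y - s₀) / |s₀ - y| ^ β) y = 0 := by
  have hset : Ioo a b ∩ {y | ε < |y - s₀|} ∩ ball s₀ δ = {y | ε < |y - s₀|} ∩ ball s₀ δ := by
    ext y
    exact ⟨fun h => ⟨h.1.2, h.2⟩, fun h => ⟨⟨hδ h.2, h.1⟩, h.2⟩⟩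
  rw [setIntegral_indicator measurableSet_ball, hset]
  have hrefl : ∀ y : ℝ, 2 * s₀ - y - s₀ = -(y - s₀) := fun y => by ring
  have hrefl' : ∀ y : ℝ, s₀ - (2 * s₀ - y) = -(s₀ - y) := fun y => by ring
  refine setIntegral_eq_zero_of_reflect (2 * s₀) ?_ fun y => ?_
  · ext y
    simp only [mem_preimage, mem_inter_iff, mem_ofPred_eq, mem_ball, Real.dist_eq, hrefl, abs_neg]
  · simp only [hrefl, hrefl', abs_neg, mul_neg, neg_div]

/-- The `ε`-truncation of the regional fractional Laplacian `L_{(a,b)} f (s₀)`. -/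
noncomputable def truncRegionalFracLaplacian (a b α : ℝ) (f : ℝ → ℝ) (s₀ ε : ℝ) : ℝ :=
  ∫ y in Ioo a b ∩ {y | ε < |y - s₀|}, (f y - f s₀) / |s₀ - y| ^ (1 + α)

theorem exists_tendsto_truncRegionalFracLaplacian {f : ℝ → ℝ} {a b s₀ α : ℝ}
    (hs₀ : s₀ ∈ Ioo a b) (hα : α < 2) (hf : IntegrableOn f (Ioo a b))
    (hf₂ : ContDiffAt ℝ 2 f s₀) :
    ∃ L, Tendsto (truncRegionalFracLaplacian a b α f s₀) (𝓝[>] 0) (𝓝 L) := by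
  set K := deriv f s₀
  obtain ⟨M, hM⟩ := hf₂.isBigO_sub_sub_deriv_mul.bound
  obtain ⟨δ, hδ, hball⟩ := eventually_nhds_iff_ball.mp (hM.and (isOpen_Ioo.mem_nhds hs₀))
  have hδab : ball s₀ δ ⊆ Ioo a b := fun y hy => (hball y hy).2
  set g := fun y => (f y - f s₀) / |s₀ - y| ^ (1 + α)
  set odd := (ball s₀ δ).indicator fun y => K * (y - s₀) / |s₀ - y| ^ (1 + α)
  have hf' : IntegrableOn (fun y => f y - f s₀) (Ioo a b) :=
    hf.sub (integrableOn_const measure_Ioo_lt_top.ne)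
  have hnear : IntegrableOn (g - odd) (ball s₀ δ) := by
    refine (integrableOn_ball_div_abs_sub_rpow_of_le_sq hα
      (((hf.mono_set hδab).aestronglyMeasurable.sub aestronglyMeasurable_const).sub
        (by fun_prop : Continuous fun y => K * (y - s₀)).aestronglyMeasurable)
      fun y hy => by simpa using (hball y hy).1).congr_fun (fun y hy => ?_) measurableSet_ball
    simp only [Pi.sub_apply, g, odd, indicator_of_mem hy, sub_div]
  have hfar : IntegrableOn (g - odd) (Ioo a b ∩ {y | δ ≤ |y - s₀|}) := by
    refine (integrableOn_div_abs_sub_rpow_of_le_abs (β := 1 + α) hf' hδ).congr_fun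
      (fun y hy => ?_) (measurableSet_Ioo.inter (measurableSet_le measurable_const (by fun_prop)))
    have : y ∉ ball s₀ δ := by simpa [Real.dist_eq] using hy.2
    simp [g, odd, indicator_of_notMem this]
  have hq : IntegrableOn (g - odd) (Ioo a b) := (hnear.union hfar).mono_set fun y hy => by
    by_cases hyδ : |y - s₀| < δ
    · exact Or.inl (by simpa [Real.dist_eq] using hyδ)
    · exact Or.inr ⟨hy, not_lt.mp hyδ⟩
  refine ⟨∫ y in Ioo a b, (g - odd) y, (tendsto_setIntegral_inter_lt_abs_sub s₀ hq).congr' ?_⟩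
  filter_upwards [self_mem_nhdsWithin] with ε (hε : 0 < ε)
  have hg : IntegrableOn g (Ioo a b ∩ {y | ε < |y - s₀|}) :=
    (integrableOn_div_abs_sub_rpow_of_le_abs (β := 1 + α) hf' hε).mono_set
      (inter_subset_inter_right _ fun y (hy : ε < _) => hy.le)
  have hodd : IntegrableOn odd (Ioo a b ∩ {y | ε < |y - s₀|}) :=
    sub_sub_cancel g odd ▸ hg.sub (hq.mono_set inter_subset_left)
  rw [Pi.sub_def, integral_sub hg hodd, setIntegral_inter_lt_abs_sub_indicator_ball_eq_zero hδab,
    sub_zero]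
  rfl

theorem integrableOn_Ioo_one_sub_sq_rpow {p : ℝ} (hp : 0 ≤ p) :
    IntegrableOn (fun y : ℝ => (1 - y ^ 2) ^ p) (Ioo (-1) 1) :=
  ((Real.continuous_rpow_const hp).comp (by fun_prop : Continuous fun y : ℝ => 1 - y ^ 2)
    |>.integrableOn_Icc).mono_set Ioo_subset_Icc_self

theorem contDiffAt_one_sub_sq_rpow {p y : ℝ} (hy : y ∈ Ioo (-1 : ℝ) 1) :
    ContDiffAt ℝ 2 (fun y : ℝ => (1 - y ^ 2) ^ p) y :=
  (by fun_prop : ContDiff ℝ 2 fun y : ℝ => 1 - y ^ 2).contDiffAt.rpow_const_of_ne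
    (by nlinarith [hy.1, hy.2])

theorem norm_single_add_smul_sq {n : ℕ} (i : Fin n) (x t : ℝ) {h : EuclideanSpace ℝ (Fin n)}
    (hh : ‖h‖ = 1) :
    ‖EuclideanSpace.single i x + t • h‖ ^ 2 = x ^ 2 + 2 * t * (x * h i) + t ^ 2 := by
  rw [norm_add_sq_real, real_inner_smul_right, EuclideanSpace.inner_single_left, norm_smul, hh,
    PiLp.norm_single]
  simp only [conj_trivial, Real.norm_eq_abs, sq_abs, mul_one]
  ring

theorem rescaled_kernel_eq {c s₀ y α : ℝ} (hc : 0 < c) (hy : y ^ 2 ≤ 1) (hs₀ : s₀ ^ 2 ≤ 1) :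
    c * (((c ^ 2 * (1 - s₀ ^ 2)) ^ ((α - 1) / 2) - (c ^ 2 * (1 - y ^ 2)) ^ ((α - 1) / 2)) /
      |c * (y - s₀)| ^ (1 + α)) =
    c⁻¹ * -(((1 - y ^ 2) ^ ((α - 1) / 2) - (1 - s₀ ^ 2) ^ ((α - 1) / 2)) / |s₀ - y| ^ (1 + α)) := by
  have hc2 : (c ^ 2) ^ ((α - 1) / 2) = c ^ (α - 1) := by
    rw [← Real.rpow_natCast, ← Real.rpow_mul hc.le]; ring_nf
  have hpow : c * c ^ (α - 1) / c ^ (1 + α) = c⁻¹ := by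
    nth_rw 1 [← Real.rpow_one c]
    rw [← Real.rpow_add hc, ← Real.rpow_sub hc, ← Real.rpow_neg_one]
    ring_nf
  rw [Real.mul_rpow (by positivity) (by linarith), Real.mul_rpow (by positivity) (by linarith), hc2,
    abs_mul, abs_of_pos hc, Real.mul_rpow hc.le (abs_nonneg _), abs_sub_comm s₀ y, ← hpow]
  field_simp
  ring

theorem tendsto_div_const_nhdsGT_zero {c : ℝ} (hc : 0 < c) :
    Tendsto (fun ε : ℝ => ε / c) (𝓝[>] 0) (𝓝[>] 0) :=
  tendsto_nhdsWithin_of_tendsto_nhds_of_eventually_within _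
    ((continuous_id.div_const c).tendsto' 0 0 (zero_div c) |>.mono_left nhdsWithin_le_nhds)
    (eventually_nhdsWithin_of_forall fun _ hε => div_pos hε hc)

theorem setIntegral_chord_eq {n : ℕ} (i : Fin n) {h : EuclideanSpace ℝ (Fin n)} (hh : ‖h‖ = 1)
    {x c s₀ α : ℝ} (hc : 0 < c) (hcA : c ^ 2 = 1 - x ^ 2 + x ^ 2 * h i ^ 2)
    (hcs₀ : x * h i = c * s₀) (hs₀ : s₀ ^ 2 ≤ 1) (ε : ℝ) :
    ∫ t in Ioo (c * (-1 - s₀)) (c * (1 - s₀)) ∩ {t : ℝ | ε < |t|},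
      ((1 - ‖EuclideanSpace.single i x‖ ^ 2) ^ ((α - 1) / 2) -
        (1 - ‖EuclideanSpace.single i x + t • h‖ ^ 2) ^ ((α - 1) / 2)) / |t| ^ (1 + α) =
      c⁻¹ * -truncRegionalFracLaplacian (-1) 1 α (fun y => (1 - y ^ 2) ^ ((α - 1) / 2)) s₀
        (ε / c) := by
  rw [setIntegral_Ioo_inter_lt_abs_eq_smul hc, smul_eq_mul, truncRegionalFracLaplacian,
    ← integral_neg, ← integral_const_mul, ← integral_const_mul]
  refine setIntegral_congr_fun (measurableSet_Ioo.inter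
    (measurableSet_lt measurable_const (by fun_prop))) fun y hy => ?_
  have hy2 : y ^ 2 ≤ 1 := by nlinarith [hy.1.1, hy.1.2]
  rw [norm_single_add_smul_sq _ _ _ hh, PiLp.norm_single, Real.norm_eq_abs, sq_abs,
    ← rescaled_kernel_eq hc hy2 hs₀]
  congr 4
  · linear_combination -(x * h i + c * s₀) * hcs₀ - hcA
  · linear_combination -(2 * c * y + x * h i - c * s₀) * hcs₀ - hcA

/-- Reduction of the one-dimensional section integral `g(x,h)` to the regional
fractional Laplacian of `w₁(s) = (1-s²)^{(α-1)/2}` on `(-1,1)`: the principal value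
`L_{(-1,1)} w₁` exists at the point `x h_n / √(1-x²+x²h_n²)` with value `L₁`, and the
principal value defining `g(x,h)` exists and equals
`(1-x²+x²h_n²)^{-1/2} · (-L₁) `. -/
theorem section_integral_eq (n : ℕ) (hn : 2 ≤ n) (α : ℝ) (hα1 : 1 < α) (hα2 : α < 2)
    (x : ℝ) (hx0 : 0 ≤ x) (hx1 : x < 1) (h : EuclideanSpace ℝ (Fin n))
    (hh : h ∈ sphere (0 : EuclideanSpace ℝ (Fin n)) 1)
    (hcoord : ℝ) (hhn : hcoord = h ⟨n - 1, by omega⟩)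
    (xx : EuclideanSpace ℝ (Fin n)) (hxx : xx = EuclideanSpace.single ⟨n - 1, by omega⟩ x) :
    ∃ L₁ : ℝ,
      Tendsto (fun ε : ℝ =>
          ∫ y in Ioo (-1 : ℝ) 1 ∩
              {y : ℝ | ε < |y - x * hcoord / Real.sqrt (1 - x ^ 2 + x ^ 2 * hcoord ^ 2)|},
            ((1 - y ^ 2) ^ ((α - 1) / 2) -
              (1 - (x * hcoord / Real.sqrt (1 - x ^ 2 + x ^ 2 * hcoord ^ 2)) ^ 2) ^
                ((α - 1) / 2)) /
            |x * hcoord / Real.sqrt (1 - x ^ 2 + x ^ 2 * hcoord ^ 2) - y| ^ (1 + α))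
        (𝓝[>] (0 : ℝ)) (𝓝 L₁) ∧
      Tendsto (fun ε : ℝ =>
          ∫ t in Ioo (-x * hcoord - Real.sqrt (x ^ 2 * hcoord ^ 2 - x ^ 2 + 1))
              (-x * hcoord + Real.sqrt (x ^ 2 * hcoord ^ 2 - x ^ 2 + 1)) ∩
              {t : ℝ | ε < |t|},
            ((1 - ‖xx‖ ^ 2) ^ ((α - 1) / 2) - (1 - ‖xx + t • h‖ ^ 2) ^ ((α - 1) / 2)) /
              |t| ^ (1 + α))
        (𝓝[>] (0 : ℝ))
        (𝓝 ((1 - x ^ 2 + x ^ 2 * hcoord ^ 2) ^ (-(1 : ℝ) / 2) * (-L₁))) := by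
  set A := 1 - x ^ 2 + x ^ 2 * hcoord ^ 2
  have hA : 0 < A := by nlinarith [sq_nonneg (x * hcoord)]
  set c := Real.sqrt A
  have hc : 0 < c := Real.sqrt_pos.mpr hA
  have hcA : c ^ 2 = A := Real.sq_sqrt hA.le
  set s₀ := x * hcoord / c
  have hcs₀ : x * hcoord = c * s₀ := (mul_div_cancel₀ _ hc.ne').symm
  have hs₀ : s₀ ^ 2 < 1 := by
    rw [div_pow, div_lt_one (by positivity), hcA]; nlinarith
  have hs₀mem : s₀ ∈ Ioo (-1) 1 := abs_lt.mp ((sq_lt_one_iff_abs_lt_one s₀).mp hs₀)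
  obtain ⟨L₁, hL₁⟩ := exists_tendsto_truncRegionalFracLaplacian
    (f := fun y => (1 - y ^ 2) ^ ((α - 1) / 2)) hs₀mem hα2
    (integrableOn_Ioo_one_sub_sq_rpow (by linarith)) (contDiffAt_one_sub_sq_rpow hs₀mem)
  refine ⟨L₁, hL₁, ?_⟩
  have hchord : x ^ 2 * hcoord ^ 2 - x ^ 2 + 1 = A := by ring
  have hlo : -x * hcoord - c = c * (-1 - s₀) := by rw [neg_mul, hcs₀]; ring
  have hhi : -x * hcoord + c = c * (1 - s₀) := by rw [neg_mul, hcs₀]; ring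
  have hAc : A ^ (-(1 : ℝ) / 2) = c⁻¹ := by
    rw [neg_div, Real.rpow_neg hA.le, ← Real.sqrt_eq_rpow]
  subst hhn hxx
  rw [hchord, hlo, hhi, hAc]
  exact ((hL₁.comp (tendsto_div_const_nhdsGT_zero hc)).neg.const_mul _).congr fun ε =>
    (setIntegral_chord_eq _ (by simpa using hh) hc hcA hcs₀ hs₀.le ε).symm
end

section
/- Let $1<\alpha<2$, $n\geq 2$, let $B\subset\mathbb{R}^n$ be the open unit ball, $w_n(x)=(1-|x|^2)^{(\alpha-1)/2}$, $a_k=1-2^{-k}$, $B_k=B(0,a_k)$. Then for every measurable $v:B\to\mathbb{R}$ (with all integrals interpreted in $[0,\infty]$): $\int_B\int_B (v(x)-v(y))^2\,\frac{w_n(x)w_n(y)}{|x-y|^{n+\alpha}}\,dx\,dy + \int_B v^2(x)\,w_n^2(x)\,dx \;\geq\; \frac{\alpha-1}{2}\sum_{k=1}^{\infty}2^{-k(\alpha-1)}\left(\int_{B_k}\int_{B_k}\frac{(v(x)-v(y))^2}{|x-y|^{n+\alpha}}\,dx\,dy + \int_{B_k}v^2(x)\,dx\right)$. -/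
/-!
With `p = α - 1 ∈ (0, 1]`, the two points `x, y` lie in `B_k` exactly when
`2^{-k} < 1 - max(|x|, |y|)`, so the weights of the dyadic sum form a geometric tail, and
`(p/2) ∑_k 2^{-kp} 1_{B_k}(x) 1_{B_k}(y) ≤ (1 - max(|x|, |y|))^p ≤ w_n(x) w_n(y)`.
Writing each integral over `B_k` as an integral over `B` against indicators, the claim follows by
integrating this pointwise bound against `(v(x) - v(y))² / |x - y|^{n+α}` (and its diagonal
version against `v²`), since a series of lower integrals is at most the lower integral of the
series.
-/

open MeasureTheory Metric
open scoped ENNReal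

lemma half_le_one_sub_two_rpow_neg {p : ℝ} (hp0 : 0 ≤ p) (hp1 : p ≤ 1) :
    p / 2 ≤ 1 - (2 : ℝ) ^ (-p) := by
  have h := rpow_one_add_le_one_add_mul_self (s := -(1 / 2)) (by norm_num) hp0 hp1
  rw [Real.rpow_neg zero_le_two, ← Real.inv_rpow zero_le_two]
  norm_num at h ⊢
  linarith

lemma two_rpow_neg_succ (k : ℕ) : (2 : ℝ) ^ (-((k : ℝ) + 1)) = 2⁻¹ ^ (k + 1) := by
  rw [Real.rpow_neg zero_le_two, ← Nat.cast_add_one, Real.rpow_natCast, inv_pow]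

lemma two_rpow_neg_succ_mul (p : ℝ) (k : ℕ) :
    (2 : ℝ) ^ (-((k : ℝ) + 1) * p) = ((2 : ℝ) ^ (-p)) ^ (k + 1) := by
  rw [← Real.rpow_natCast, ← Real.rpow_mul zero_le_two]
  push_cast
  ring_nf

/-- `dyadicWeight p s = ∑_{k ≥ 1, s < a_k} 2^{-kp}` with `a_k = 1 - 2^{-k}`; the summation index
`k : ℕ` stands for the paper's `k + 1`. -/
noncomputable def dyadicWeight (p s : ℝ) : ℝ≥0∞ :=
  ∑' k : ℕ, if s < 1 - (2 : ℝ) ^ (-((k : ℝ) + 1)) then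
    ENNReal.ofReal ((2 : ℝ) ^ (-((k : ℝ) + 1) * p)) else 0

lemma dyadicWeight_of_one_le {p s : ℝ} (hs : 1 ≤ s) : dyadicWeight p s = 0 := by
  refine ENNReal.tsum_eq_zero.mpr fun k => if_neg ?_
  have := Real.rpow_pos_of_pos two_pos (-((k : ℝ) + 1))
  linarith

/-- The balls `B_k` containing a point of norm `s` are those with `k ≥ m`, where `2^{-m}` is the
first dyadic number below `1 - s`; the geometric tail is `2^{-mp} / (1 - 2^{-p})`, and
`p / 2 ≤ 1 - 2^{-p}` absorbs the denominator. -/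
lemma ofReal_half_mul_dyadicWeight_le {p s : ℝ} (hp0 : 0 < p) (hp1 : p ≤ 1) (hs : s < 1) :
    ENNReal.ofReal (p / 2) * dyadicWeight p s ≤ ENNReal.ofReal ((1 - s) ^ p) := by
  classical
  set q : ℝ := (2 : ℝ) ^ (-p)
  have hq0 : 0 ≤ q := Real.rpow_nonneg zero_le_two _
  have hex : ∃ k : ℕ, (2 : ℝ)⁻¹ ^ (k + 1) < 1 - s := by
    obtain ⟨N, hN⟩ := exists_pow_lt_of_lt_one (sub_pos.mpr hs) (by norm_num : (2 : ℝ)⁻¹ < 1)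
    exact ⟨N, (pow_le_pow_of_le_one (by norm_num) (by norm_num) N.le_succ).trans_lt hN⟩
  set m := Nat.find hex
  have hterm : ∀ k : ℕ, (if s < 1 - (2 : ℝ) ^ (-((k : ℝ) + 1)) then
      ENNReal.ofReal ((2 : ℝ) ^ (-((k : ℝ) + 1) * p)) else 0) ≤
      if m ≤ k then ENNReal.ofReal q ^ (k + 1) else 0 := by
    intro k
    split_ifs with hk hmk
    · rw [two_rpow_neg_succ_mul, ENNReal.ofReal_pow hq0]
    · exact absurd (Nat.find_min' hex (by rw [two_rpow_neg_succ] at hk; linarith)) hmk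
    · exact zero_le
    · exact le_rfl
  have htail : ∑' k, (if m ≤ k then ENNReal.ofReal q ^ (k + 1) else 0) =
      ENNReal.ofReal q ^ (m + 1) * (1 - ENNReal.ofReal q)⁻¹ := by
    rw [← ENNReal.summable.sum_add_tsum_nat_add', Finset.sum_eq_zero fun k hk =>
      if_neg (by simpa using hk), zero_add, ← ENNReal.tsum_geometric, ← ENNReal.tsum_mul_left]
    refine tsum_congr fun i => ?_
    rw [if_pos (Nat.le_add_left m i), ← pow_add]
    ring_nf
  have hfirst : ENNReal.ofReal q ^ (m + 1) ≤ ENNReal.ofReal ((1 - s) ^ p) := by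
    rw [← ENNReal.ofReal_pow hq0, ← two_rpow_neg_succ_mul, Real.rpow_mul zero_le_two,
      two_rpow_neg_succ]
    exact ENNReal.ofReal_le_ofReal
      (Real.rpow_le_rpow (by positivity) (Nat.find_spec hex).le hp0.le)
  have hconst : ENNReal.ofReal (p / 2) / (1 - ENNReal.ofReal q) ≤ 1 := by
    refine ENNReal.div_le_of_le_mul ?_
    rw [one_mul, ← ENNReal.ofReal_one, ← ENNReal.ofReal_sub _ hq0]
    exact ENNReal.ofReal_le_ofReal (half_le_one_sub_two_rpow_neg hp0.le hp1)
  calc ENNReal.ofReal (p / 2) * dyadicWeight p s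
      ≤ ENNReal.ofReal (p / 2) * (ENNReal.ofReal q ^ (m + 1) * (1 - ENNReal.ofReal q)⁻¹) := by
        rw [← htail]
        gcongr
        exact ENNReal.tsum_le_tsum hterm
    _ = ENNReal.ofReal (p / 2) / (1 - ENNReal.ofReal q) * ENNReal.ofReal q ^ (m + 1) := by
        rw [ENNReal.div_eq_inv_mul]
        ring
    _ ≤ 1 * ENNReal.ofReal ((1 - s) ^ p) := by gcongr
    _ = ENNReal.ofReal ((1 - s) ^ p) := one_mul _

lemma one_sub_max_rpow_le {p a b : ℝ} (hp : 0 ≤ p) (ha : 0 ≤ a) (hb : 0 ≤ b)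
    (hab : max a b < 1) :
    (1 - max a b) ^ p ≤ (1 - a ^ 2) ^ (p / 2) * (1 - b ^ 2) ^ (p / 2) := by
  obtain ⟨ha1, hb1⟩ := max_lt_iff.mp hab
  calc (1 - max a b) ^ p = (1 - max a b) ^ (p / 2) * (1 - max a b) ^ (p / 2) := by
        rw [← Real.rpow_add (sub_pos.mpr hab), add_halves]
    _ ≤ (1 - a ^ 2) ^ (p / 2) * (1 - b ^ 2) ^ (p / 2) := by
        have hpos : 0 ≤ 1 - max a b := by linarith
        have ha2 : 1 - max a b ≤ 1 - a ^ 2 := by nlinarith [le_max_left a b]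
        have hb2 : 1 - max a b ≤ 1 - b ^ 2 := by nlinarith [le_max_right a b]
        exact mul_le_mul (Real.rpow_le_rpow hpos ha2 (by linarith))
          (Real.rpow_le_rpow hpos hb2 (by linarith)) (Real.rpow_nonneg hpos _)
          (Real.rpow_nonneg (hpos.trans ha2) _)

lemma ofReal_half_mul_dyadicWeight_max_le {p a b : ℝ} (hp0 : 0 < p) (hp1 : p ≤ 1)
    (ha : 0 ≤ a) (hb : 0 ≤ b) :
    ENNReal.ofReal (p / 2) * dyadicWeight p (max a b) ≤
      ENNReal.ofReal ((1 - a ^ 2) ^ (p / 2) * (1 - b ^ 2) ^ (p / 2)) := by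
  rcases lt_or_ge (max a b) 1 with hab | hab
  · exact (ofReal_half_mul_dyadicWeight_le hp0 hp1 hab).trans
      (ENNReal.ofReal_le_ofReal (one_sub_max_rpow_le hp0.le ha hb hab))
  · simp [dyadicWeight_of_one_le hab]

section DyadicBalls

variable {E : Type*} [SeminormedAddCommGroup E]

lemma tsum_mul_indicator_ball_eq_dyadicWeight (p : ℝ) (x : E) :
    ∑' k : ℕ, ENNReal.ofReal ((2 : ℝ) ^ (-((k : ℝ) + 1) * p)) *
      (ball (0 : E) (1 - 2 ^ (-((k : ℝ) + 1)))).indicator 1 x = dyadicWeight p ‖x‖ := by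
  classical
  refine tsum_congr fun k => ?_
  simp only [Set.indicator_apply, mem_ball_zero_iff, Pi.one_apply]
  split_ifs <;> simp

lemma tsum_mul_indicator_ball_mul_eq_dyadicWeight (p : ℝ) (x y : E) :
    ∑' k : ℕ, ENNReal.ofReal ((2 : ℝ) ^ (-((k : ℝ) + 1) * p)) *
      ((ball (0 : E) (1 - 2 ^ (-((k : ℝ) + 1)))).indicator 1 x *
        (ball (0 : E) (1 - 2 ^ (-((k : ℝ) + 1)))).indicator 1 y) =
      dyadicWeight p (max ‖x‖ ‖y‖) := by
  classical
  refine tsum_congr fun k => ?_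
  simp only [Set.indicator_apply, mem_ball_zero_iff, Pi.one_apply, max_lt_iff]
  split_ifs <;> first | (exfalso; tauto) | simp

end DyadicBalls

section WeightedSums

variable {α : Type*} [MeasurableSpace α] {μ : Measure α}

lemma sum_lintegral_le_lintegral_sum (f : ℕ → α → ℝ≥0∞) (N : ℕ) :
    ∑ k ∈ Finset.range N, ∫⁻ a, f k a ∂μ ≤ ∫⁻ a, ∑ k ∈ Finset.range N, f k a ∂μ := by
  induction N with
  | zero => simp
  | succ N ih =>
    simp only [Finset.sum_range_succ]
    exact (add_le_add ih le_rfl).trans (le_lintegral_add _ _)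

lemma tsum_lintegral_le_lintegral_tsum (f : ℕ → α → ℝ≥0∞) :
    ∑' k, ∫⁻ a, f k a ∂μ ≤ ∫⁻ a, ∑' k, f k a ∂μ := by
  rw [ENNReal.tsum_eq_iSup_nat]
  exact iSup_le fun N => (sum_lintegral_le_lintegral_sum f N).trans
    (lintegral_mono fun a => ENNReal.sum_le_tsum _)

lemma mul_setLIntegral_le_setLIntegral {s t : Set α} (hs : MeasurableSet s) (hst : s ⊆ t)
    (c : ℝ≥0∞) (f : α → ℝ≥0∞) :
    c * ∫⁻ x in s, f x ∂μ ≤ ∫⁻ x in t, c * s.indicator 1 x * f x ∂μ := by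
  rw [← Measure.restrict_restrict_of_subset hst, ← lintegral_indicator hs]
  refine (lintegral_const_mul_le _ _).trans_eq (lintegral_congr fun x => ?_)
  by_cases hx : x ∈ s <;> simp [hx]

variable {s : ℕ → Set α} {t : Set α} {c : ℝ≥0∞} {w : ℕ → ℝ≥0∞}

lemma mul_tsum_mul_setLIntegral_le (hs : ∀ k, MeasurableSet (s k)) (hst : ∀ k, s k ⊆ t)
    {f g : α → ℝ≥0∞} (hfg : ∀ x, c * (∑' k, w k * (s k).indicator 1 x) * f x ≤ g x) :
    c * ∑' k, w k * ∫⁻ x in s k, f x ∂μ ≤ ∫⁻ x in t, g x ∂μ := by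
  calc c * ∑' k, w k * ∫⁻ x in s k, f x ∂μ
      ≤ c * ∑' k, ∫⁻ x in t, w k * (s k).indicator 1 x * f x ∂μ := by
        gcongr with k
        exact mul_setLIntegral_le_setLIntegral (hs k) (hst k) _ _
    _ ≤ c * ∫⁻ x in t, ∑' k, w k * (s k).indicator 1 x * f x ∂μ := by
        gcongr
        exact tsum_lintegral_le_lintegral_tsum _
    _ ≤ ∫⁻ x in t, c * ∑' k, w k * (s k).indicator 1 x * f x ∂μ := lintegral_const_mul_le _ _
    _ ≤ ∫⁻ x in t, g x ∂μ := lintegral_mono fun x => by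
        rw [ENNReal.tsum_mul_right, ← mul_assoc]
        exact hfg x

lemma mul_tsum_mul_setLIntegral_setLIntegral_le (hs : ∀ k, MeasurableSet (s k))
    (hst : ∀ k, s k ⊆ t) {F G : α → α → ℝ≥0∞}
    (hFG : ∀ x y, c * (∑' k, w k * ((s k).indicator 1 x * (s k).indicator 1 y)) * F x y ≤ G x y) :
    c * ∑' k, w k * ∫⁻ x in s k, ∫⁻ y in s k, F x y ∂μ ∂μ ≤ ∫⁻ x in t, ∫⁻ y in t, G x y ∂μ ∂μ := by
  calc c * ∑' k, w k * ∫⁻ x in s k, ∫⁻ y in s k, F x y ∂μ ∂μ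
      ≤ c * ∑' k, ∫⁻ x in t, ∫⁻ y in t,
          w k * ((s k).indicator 1 x * (s k).indicator 1 y) * F x y ∂μ ∂μ := by
        gcongr with k
        refine (mul_setLIntegral_le_setLIntegral (hs k) (hst k) _ _).trans
          (lintegral_mono fun x => ?_)
        refine (mul_setLIntegral_le_setLIntegral (hs k) (hst k) _ _).trans_eq
          (lintegral_congr fun y => ?_)
        ring
    _ ≤ c * ∫⁻ x in t, ∫⁻ y in t,
          ∑' k, w k * ((s k).indicator 1 x * (s k).indicator 1 y) * F x y ∂μ ∂μ := by
        gcongr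
        exact (tsum_lintegral_le_lintegral_tsum _).trans
          (lintegral_mono fun x => tsum_lintegral_le_lintegral_tsum _)
    _ ≤ ∫⁻ x in t, ∫⁻ y in t,
          c * ∑' k, w k * ((s k).indicator 1 x * (s k).indicator 1 y) * F x y ∂μ ∂μ :=
        (lintegral_const_mul_le _ _).trans (lintegral_mono fun x => lintegral_const_mul_le _ _)
    _ ≤ ∫⁻ x in t, ∫⁻ y in t, G x y ∂μ ∂μ := lintegral_mono fun x => lintegral_mono fun y => by
        rw [ENNReal.tsum_mul_right, ← mul_assoc]
        exact hFG x y

end WeightedSums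

theorem weighted_form_dyadic_lower_bound_general (n : ℕ) (α : ℝ)
    (hα1 : 1 < α) (hα2 : α < 2) (v : EuclideanSpace ℝ (Fin n) → ℝ) :
    (∫⁻ x in ball (0 : EuclideanSpace ℝ (Fin n)) 1,
        ∫⁻ y in ball (0 : EuclideanSpace ℝ (Fin n)) 1,
          ENNReal.ofReal ((v x - v y) ^ 2 *
            ((1 - ‖x‖ ^ 2) ^ ((α - 1) / 2) * (1 - ‖y‖ ^ 2) ^ ((α - 1) / 2)) /
            ‖x - y‖ ^ ((n : ℝ) + α))) +
      (∫⁻ x in ball (0 : EuclideanSpace ℝ (Fin n)) 1,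
        ENNReal.ofReal ((v x) ^ 2 * ((1 - ‖x‖ ^ 2) ^ ((α - 1) / 2)) ^ 2)) ≥
    ENNReal.ofReal ((α - 1) / 2) *
      ∑' k : ℕ, ENNReal.ofReal ((2 : ℝ) ^ (-((k : ℝ) + 1) * (α - 1))) *
        ((∫⁻ x in ball (0 : EuclideanSpace ℝ (Fin n)) (1 - 2 ^ (-((k : ℝ) + 1))),
            ∫⁻ y in ball (0 : EuclideanSpace ℝ (Fin n)) (1 - 2 ^ (-((k : ℝ) + 1))),
              ENNReal.ofReal ((v x - v y) ^ 2 / ‖x - y‖ ^ ((n : ℝ) + α))) +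
          ∫⁻ x in ball (0 : EuclideanSpace ℝ (Fin n)) (1 - 2 ^ (-((k : ℝ) + 1))),
            ENNReal.ofReal ((v x) ^ 2)) := by
  have hp0 : 0 < α - 1 := by linarith
  have hp1 : α - 1 ≤ 1 := by linarith
  have hsub (k : ℕ) : ball (0 : EuclideanSpace ℝ (Fin n)) (1 - 2 ^ (-((k : ℝ) + 1))) ⊆ ball 0 1 :=
    ball_subset_ball (by linarith [Real.rpow_pos_of_pos two_pos (-((k : ℝ) + 1))])
  rw [ge_iff_le]
  simp_rw [mul_add]
  rw [ENNReal.tsum_add, mul_add]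
  gcongr ?_ + ?_
  · refine mul_tsum_mul_setLIntegral_setLIntegral_le (fun _ => measurableSet_ball) hsub
      fun x y => ?_
    rw [tsum_mul_indicator_ball_mul_eq_dyadicWeight, mul_comm _ (_ * _), mul_div_assoc,
      ENNReal.ofReal_mul' (div_nonneg (sq_nonneg _) (Real.rpow_nonneg (norm_nonneg _) _))]
    exact mul_le_mul_left
      (ofReal_half_mul_dyadicWeight_max_le hp0 hp1 (norm_nonneg x) (norm_nonneg y)) _
  · refine mul_tsum_mul_setLIntegral_le (fun _ => measurableSet_ball) hsub fun x => ?_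
    have hweight := ofReal_half_mul_dyadicWeight_max_le hp0 hp1 (norm_nonneg x) (norm_nonneg x)
    rw [max_self, ← sq] at hweight
    rw [tsum_mul_indicator_ball_eq_dyadicWeight, mul_comm (v x ^ 2),
      ENNReal.ofReal_mul' (sq_nonneg _)]
    exact mul_le_mul_left hweight _

/-- Dyadic decomposition lower bound for the weighted form: for every measurable
`v`, with all integrals in `[0,∞]`,
`∫_B∫_B (v(x)-v(y))² w_n(x)w_n(y)/|x-y|^{n+α} dx dy + ∫_B v² w_n²
  ≥ ((α-1)/2) ∑_{k≥1} 2^{-k(α-1)} (∫_{B_k}∫_{B_k} (v(x)-v(y))²/|x-y|^{n+α} dx dy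
      + ∫_{B_k} v²)`,
where `w_n(x) = (1-|x|²)^{(α-1)/2}` and `B_k` is the ball of radius `1-2^{-k}`. -/
theorem weighted_form_dyadic_lower_bound (n : ℕ) (hn : 2 ≤ n) (α : ℝ)
    (hα1 : 1 < α) (hα2 : α < 2) (v : EuclideanSpace ℝ (Fin n) → ℝ)
    (hv : Measurable v) :
    (∫⁻ x in ball (0 : EuclideanSpace ℝ (Fin n)) 1,
        ∫⁻ y in ball (0 : EuclideanSpace ℝ (Fin n)) 1,
          ENNReal.ofReal ((v x - v y) ^ 2 *
            ((1 - ‖x‖ ^ 2) ^ ((α - 1) / 2) * (1 - ‖y‖ ^ 2) ^ ((α - 1) / 2)) /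
            ‖x - y‖ ^ ((n : ℝ) + α))) +
      (∫⁻ x in ball (0 : EuclideanSpace ℝ (Fin n)) 1,
        ENNReal.ofReal ((v x) ^ 2 * ((1 - ‖x‖ ^ 2) ^ ((α - 1) / 2)) ^ 2)) ≥
    ENNReal.ofReal ((α - 1) / 2) *
      ∑' k : ℕ, ENNReal.ofReal ((2 : ℝ) ^ (-((k : ℝ) + 1) * (α - 1))) *
        ((∫⁻ x in ball (0 : EuclideanSpace ℝ (Fin n)) (1 - 2 ^ (-((k : ℝ) + 1))),
            ∫⁻ y in ball (0 : EuclideanSpace ℝ (Fin n)) (1 - 2 ^ (-((k : ℝ) + 1))),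
              ENNReal.ofReal ((v x - v y) ^ 2 / ‖x - y‖ ^ ((n : ℝ) + α))) +
          ∫⁻ x in ball (0 : EuclideanSpace ℝ (Fin n)) (1 - 2 ^ (-((k : ℝ) + 1))),
            ENNReal.ofReal ((v x) ^ 2)) :=
  weighted_form_dyadic_lower_bound_general n α hα1 hα2 v
end
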